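/- arXiv:2603.08087 — 3 statements merged into one kernel-verified Lean document; each statement's English description precedes it below -/
import Mathlib

section
/- Suppose there exists x_ν ∈ X attaining v(ν) (i.e., v(ν) is finite and g(x_ν) + ∫_Ξ Q(x_ν,ξ) dν(ξ) = v(ν)), that Q(x_ν,·) is integrable with respect to both P and ν, and that there exist a measurable cost c : Ξ × Ξ → [0,∞] and a constant β > 0 such that R(ξ,ξ') ≤ β·c(ξ,ξ') for all ξ, ξ' ∈ Ξ (regret domination). Then v(P) − v(ν) ≤ β·T_c(P,ν), the inequality being interpreted in the extended reals (trivially true when T_c(P,ν) = ∞). -/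
/-!
Evaluating `v(P)` at `x_ν` bounds `v(P) - v(ν)` by `∫ Q(x_ν,·) dP - ∫ Q(x_ν,·) dν`, which for any
coupling `π` equals `∫ (Q(x_ν,ξ) - Q(x_ν,ξ')) dπ`; regret domination bounds the integrand by
`β c(ξ,ξ')`. Taking positive parts in `ℝ≥0∞` makes the bound hold without knowing whether
`∫ c dπ` is finite, so it passes to the infimum over couplings.
-/

open MeasureTheory ENNReal

/-- The set of couplings of two probability measures on `Ξ`: probability measures on
`Ξ × Ξ` whose first marginal is `μ` and second marginal is `ν`. -/
def Couplings {Ξ : Type*} [MeasurableSpace Ξ] (μ ν : Measure Ξ) : Set (Measure (Ξ × Ξ)) :=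
  {π | IsProbabilityMeasure π ∧ π.map Prod.fst = μ ∧ π.map Prod.snd = ν}

/-- Optimal transport cost `T_c(μ,ν) = inf over couplings of ∫ c dπ`, in `[0,∞]`. -/
noncomputable def transportCost {Ξ : Type*} [MeasurableSpace Ξ] (c : Ξ → Ξ → ℝ≥0∞)
    (μ ν : Measure Ξ) : ℝ≥0∞ :=
  ⨅ π ∈ Couplings μ ν, ∫⁻ p, c p.1 p.2 ∂π

lemma EReal.coe_le_coe_ennreal_iff_ofReal_le {r : ℝ} {y : ℝ≥0∞} :
    (r : EReal) ≤ y ↔ ENNReal.ofReal r ≤ y := by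
  refine ⟨fun h => by simpa using EReal.toENNReal_le_toENNReal h, fun h => ?_⟩
  calc (r : EReal) ≤ ((max r 0 : ℝ) : EReal) := EReal.coe_le_coe_iff.2 (le_max_left r 0)
    _ = (ENNReal.ofReal r : EReal) := EReal.coe_ennreal_ofReal.symm
    _ ≤ y := EReal.coe_ennreal_le_coe_ennreal_iff.2 h

lemma EReal.coe_ennreal_ofReal_mul {β : ℝ} (hβ : 0 ≤ β) (x : ℝ≥0∞) :
    ((ENNReal.ofReal β * x : ℝ≥0∞) : EReal) = β * x := by
  rw [EReal.coe_ennreal_mul, EReal.coe_ennreal_ofReal, max_eq_left hβ]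

lemma MeasureTheory.ofReal_integral_le_lintegral_ofReal {α : Type*} [MeasurableSpace α]
    {μ : Measure α} (f : α → ℝ) :
    ENNReal.ofReal (∫ a, f a ∂μ) ≤ ∫⁻ a, ENNReal.ofReal (f a) ∂μ := by
  by_cases hf : Integrable f μ
  · calc ENNReal.ofReal (∫ a, f a ∂μ)
          ≤ ENNReal.ofReal (∫⁻ a, ENNReal.ofReal (f a) ∂μ).toReal := by
            refine ENNReal.ofReal_le_ofReal ?_
            rw [integral_eq_lintegral_pos_part_sub_lintegral_neg_part hf]
            exact sub_le_self _ ENNReal.toReal_nonneg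
      _ ≤ ∫⁻ a, ENNReal.ofReal (f a) ∂μ := ENNReal.ofReal_toReal_le
  · simp [integral_undef hf]

section Couplings

variable {Ξ : Type*} [MeasurableSpace Ξ] {μ ν : Measure Ξ} {f : Ξ → ℝ}

lemma integral_sub_integral_eq_integral_of_mem_couplings {π : Measure (Ξ × Ξ)}
    (hπ : π ∈ Couplings μ ν) (hμ : Integrable f μ) (hν : Integrable f ν) :
    ∫ ξ, f ξ ∂μ - ∫ ξ, f ξ ∂ν = ∫ p, (f p.1 - f p.2) ∂π := by
  obtain ⟨-, rfl, rfl⟩ := hπ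
  rw [integral_map measurable_fst.aemeasurable hμ.aestronglyMeasurable,
    integral_map measurable_snd.aemeasurable hν.aestronglyMeasurable]
  exact (integral_sub (hμ.comp_measurable measurable_fst) (hν.comp_measurable measurable_snd)).symm

lemma ofReal_integral_sub_integral_le_mul_transportCost {c : Ξ → Ξ → ℝ≥0∞} {β : ℝ} (hβ : 0 < β)
    (hμ : Integrable f μ) (hν : Integrable f ν)
    (hfc : ∀ ξ ξ', ENNReal.ofReal (f ξ - f ξ') ≤ ENNReal.ofReal β * c ξ ξ') :
    ENNReal.ofReal (∫ ξ, f ξ ∂μ - ∫ ξ, f ξ ∂ν) ≤ ENNReal.ofReal β * transportCost c μ ν := by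
  have hβ₀ : ENNReal.ofReal β ≠ 0 := ENNReal.ofReal_pos.2 hβ |>.ne'
  simp only [transportCost, ENNReal.mul_iInf_of_ne hβ₀ ofReal_ne_top]
  refine le_iInf₂ fun π hπ => ?_
  calc ENNReal.ofReal (∫ ξ, f ξ ∂μ - ∫ ξ, f ξ ∂ν)
        = ENNReal.ofReal (∫ p, (f p.1 - f p.2) ∂π) := by
          rw [integral_sub_integral_eq_integral_of_mem_couplings hπ hμ hν]
    _ ≤ ∫⁻ p, ENNReal.ofReal (f p.1 - f p.2) ∂π := ofReal_integral_le_lintegral_ofReal _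
    _ ≤ ∫⁻ p, ENNReal.ofReal β * c p.1 p.2 ∂π := lintegral_mono fun p => hfc p.1 p.2
    _ = ENNReal.ofReal β * ∫⁻ p, c p.1 p.2 ∂π := lintegral_const_mul' _ _ ofReal_ne_top

end Couplings

theorem stmt0_general {Ξ X : Type*} [MeasurableSpace Ξ]
    (g : X → ℝ) (Q : X → Ξ → ℝ)
    (P ν : Measure Ξ)
    (c : Ξ → Ξ → ℝ≥0∞)
    (β : ℝ) (hβ : 0 < β)
    -- regret domination: `R(ξ,ξ') = sup_x (Q(x,ξ) − Q(x,ξ')) ≤ β·c(ξ,ξ')`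
    (hdom : ∀ ξ ξ' : Ξ,
      (⨆ x : X, ((Q x ξ - Q x ξ' : ℝ) : EReal)) ≤ (β : EReal) * ((c ξ ξ' : ℝ≥0∞) : EReal))
    -- `x_ν` attains `v(ν)`
    (vν : ℝ) (xν : X)
    (hattain : g xν + ∫ ξ, Q xν ξ ∂ν = vν)
    -- integrability of `Q(x_ν, ·)` w.r.t. both measures
    (hintP : Integrable (Q xν) P) (hintν : Integrable (Q xν) ν) :
    (⨅ x : X, ((g x + ∫ ξ, Q x ξ ∂P : ℝ) : EReal)) - (vν : EReal)
      ≤ (β : EReal) * ((transportCost c P ν : ℝ≥0∞) : EReal) := by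
  have hregret : ∀ ξ ξ', ENNReal.ofReal (Q xν ξ - Q xν ξ') ≤ ENNReal.ofReal β * c ξ ξ' := by
    intro ξ ξ'
    rw [← EReal.coe_le_coe_ennreal_iff_ofReal_le, EReal.coe_ennreal_ofReal_mul hβ.le]
    exact (le_iSup (fun x => ((Q x ξ - Q x ξ' : ℝ) : EReal)) xν).trans (hdom ξ ξ')
  calc (⨅ x : X, ((g x + ∫ ξ, Q x ξ ∂P : ℝ) : EReal)) - (vν : EReal)
      ≤ ((g xν + ∫ ξ, Q xν ξ ∂P : ℝ) : EReal) - (vν : EReal) :=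
        EReal.sub_le_sub (iInf_le _ xν) le_rfl
    _ = ((∫ ξ, Q xν ξ ∂P - ∫ ξ, Q xν ξ ∂ν : ℝ) : EReal) := by
        rw [← EReal.coe_sub, ← hattain]
        congr 1
        ring
    _ ≤ ((ENNReal.ofReal β * transportCost c P ν : ℝ≥0∞) : EReal) :=
        EReal.coe_le_coe_ennreal_iff_ofReal_le.2
          (ofReal_integral_sub_integral_le_mul_transportCost hβ hintP hintν hregret)
    _ = (β : EReal) * ((transportCost c P ν : ℝ≥0∞) : EReal) := EReal.coe_ennreal_ofReal_mul hβ.le _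

/-- If `x_ν` attains `v(ν)`, `Q(x_ν,·)` is integrable w.r.t. `P` and `ν`,
and regret domination `R(ξ,ξ') ≤ β·c(ξ,ξ')` holds, then
`v(P) − v(ν) ≤ β·T_c(P,ν)` in the extended reals. -/
theorem stmt0 {Ξ X : Type*} [MeasurableSpace Ξ] [Nonempty X]
    (g : X → ℝ) (Q : X → Ξ → ℝ) (hQmeas : ∀ x, Measurable (Q x))
    (P ν : Measure Ξ) [IsProbabilityMeasure P] [IsProbabilityMeasure ν]
    (c : Ξ → Ξ → ℝ≥0∞) (hcmeas : Measurable fun p : Ξ × Ξ => c p.1 p.2)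
    (β : ℝ) (hβ : 0 < β)
    -- regret domination: `R(ξ,ξ') = sup_x (Q(x,ξ) − Q(x,ξ')) ≤ β·c(ξ,ξ')`
    (hdom : ∀ ξ ξ' : Ξ,
      (⨆ x : X, ((Q x ξ - Q x ξ' : ℝ) : EReal)) ≤ (β : EReal) * ((c ξ ξ' : ℝ≥0∞) : EReal))
    -- `x_ν` attains `v(ν)`
    (vν : ℝ) (xν : X)
    (hattain : g xν + ∫ ξ, Q xν ξ ∂ν = vν)
    (hmin : ∀ x : X, vν ≤ g x + ∫ ξ, Q x ξ ∂ν)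
    -- integrability of `Q(x_ν, ·)` w.r.t. both measures
    (hintP : Integrable (Q xν) P) (hintν : Integrable (Q xν) ν) :
    (⨅ x : X, ((g x + ∫ ξ, Q x ξ ∂P : ℝ) : EReal)) - (vν : EReal)
      ≤ (β : EReal) * ((transportCost c P ν : ℝ≥0∞) : EReal) :=
  stmt0_general g Q P ν c β hβ hdom vν xν hattain hintP hintν
end

section
/- Suppose there exist x_P ∈ X attaining v(P) and x_ν ∈ X attaining v(ν) (both optimal values finite), that Q(x_P,·) and Q(x_ν,·) are integrable with respect to both P and ν, and that there exist a measurable cost c : Ξ × Ξ → [0,∞] and a constant β > 0 such that R(ξ,ξ') ≤ β·c(ξ,ξ') for all ξ, ξ' ∈ Ξ. If in addition c is symmetric, i.e., c(ξ,ξ') = c(ξ',ξ) for all ξ, ξ' ∈ Ξ, then |v(P) − v(ν)| ≤ β·T_c(P,ν), the inequality being interpreted in the extended reals. -/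
open MeasureTheory ENNReal

/-!
For any coupling `π` of `P` and `ν`, optimality of `x_P` and `x_ν` gives
`v(P) - v(ν) ≤ ∫ Q(x_ν,·) dP - ∫ Q(x_ν,·) dν = ∫ (Q(x_ν,ξ) - Q(x_ν,ξ')) dπ ≤ β ∫ c dπ`,
the last step by regret domination. The other direction uses `x_P` and the same coupling,
which is where the symmetry of `c` is needed. Taking the infimum over `π` gives the claim.
-/

lemma EReal.le_mul_toReal_of_coe_le {a b : ℝ} {e : ℝ≥0∞} (he : e ≠ ⊤)
    (h : (a : EReal) ≤ b * e) : a ≤ b * e.toReal := by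
  have hcoe : (e : EReal) = ((e.toReal : ℝ) : EReal) := by
    rw [← EReal.toReal_coe_ennreal, EReal.coe_toReal (by simpa using he) (by simp)]
  rw [hcoe, ← EReal.coe_mul] at h
  exact_mod_cast h

lemma EReal.coe_le_coe_mul_of_ofReal_le {a b : ℝ} {t : ℝ≥0∞} (ha : 0 ≤ a) (hb : 0 ≤ b)
    (h : ENNReal.ofReal a ≤ ENNReal.ofReal b * t) : (a : EReal) ≤ b * t := by
  have h' := EReal.coe_ennreal_le_coe_ennreal_iff.mpr h
  rwa [EReal.coe_ennreal_mul, EReal.coe_ennreal_ofReal, EReal.coe_ennreal_ofReal,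
    max_eq_left ha, max_eq_left hb] at h'

section Coupling

variable {Ξ : Type*} [MeasurableSpace Ξ] {μ ν : Measure Ξ} {π : Measure (Ξ × Ξ)}

lemma integral_comp_fst_of_map_fst_eq {f : Ξ → ℝ} (hπ : π.map Prod.fst = μ)
    (hf : Integrable f μ) : ∫ p, f p.1 ∂π = ∫ ξ, f ξ ∂μ := by
  subst hπ
  exact (integral_map measurable_fst.aemeasurable hf.aestronglyMeasurable).symm

lemma integrable_comp_fst_of_map_fst_eq {f : Ξ → ℝ} (hπ : π.map Prod.fst = μ)
    (hf : Integrable f μ) : Integrable (fun p => f p.1) π := by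
  subst hπ
  exact (integrable_map_measure hf.aestronglyMeasurable measurable_fst.aemeasurable).mp hf

lemma integral_comp_snd_of_map_snd_eq {f : Ξ → ℝ} (hπ : π.map Prod.snd = ν)
    (hf : Integrable f ν) : ∫ p, f p.2 ∂π = ∫ ξ, f ξ ∂ν := by
  subst hπ
  exact (integral_map measurable_snd.aemeasurable hf.aestronglyMeasurable).symm

lemma integrable_comp_snd_of_map_snd_eq {f : Ξ → ℝ} (hπ : π.map Prod.snd = ν)
    (hf : Integrable f ν) : Integrable (fun p => f p.2) π := by
  subst hπ
  exact (integrable_map_measure hf.aestronglyMeasurable measurable_snd.aemeasurable).mp hf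

lemma ofReal_integral_sub_integral_le {c : Ξ → Ξ → ℝ≥0∞} {f : Ξ → ℝ} {β : ℝ}
    (hfst : π.map Prod.fst = μ) (hsnd : π.map Prod.snd = ν)
    (hfμ : Integrable f μ) (hfν : Integrable f ν)
    (hc : Measurable fun p : Ξ × Ξ => c p.1 p.2) (hβ : 0 < β)
    (hf : ∀ ξ ξ', ((f ξ - f ξ' : ℝ) : EReal) ≤ β * c ξ ξ') :
    ENNReal.ofReal (∫ ξ, f ξ ∂μ - ∫ ξ, f ξ ∂ν) ≤ ENNReal.ofReal β * ∫⁻ p, c p.1 p.2 ∂π := by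
  by_cases hI : ∫⁻ p, c p.1 p.2 ∂π = ⊤
  · rw [hI, ENNReal.mul_top (ENNReal.ofReal_pos.mpr hβ).ne']
    exact le_top
  have hfin : ∀ᵐ p ∂π, c p.1 p.2 < ⊤ := ae_lt_top hc hI
  have hf₁ := integrable_comp_fst_of_map_fst_eq hfst hfμ
  have hf₂ := integrable_comp_snd_of_map_snd_eq hsnd hfν
  have hcost : Integrable (fun p : Ξ × Ξ => β * (c p.1 p.2).toReal) π :=
    (integrable_toReal_of_lintegral_ne_top hc.aemeasurable hI).const_mul β
  have hle : ∫ ξ, f ξ ∂μ - ∫ ξ, f ξ ∂ν ≤ β * (∫⁻ p, c p.1 p.2 ∂π).toReal :=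
    calc ∫ ξ, f ξ ∂μ - ∫ ξ, f ξ ∂ν = ∫ p, (f p.1 - f p.2) ∂π := by
          rw [integral_sub hf₁ hf₂, integral_comp_fst_of_map_fst_eq hfst hfμ,
            integral_comp_snd_of_map_snd_eq hsnd hfν]
      _ ≤ ∫ p, β * (c p.1 p.2).toReal ∂π := by
          refine integral_mono_ae (hf₁.sub hf₂) hcost ?_
          filter_upwards [hfin] with p hp
          exact EReal.le_mul_toReal_of_coe_le hp.ne (hf p.1 p.2)
      _ = β * (∫⁻ p, c p.1 p.2 ∂π).toReal := by
          rw [integral_const_mul, integral_toReal hc.aemeasurable hfin]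
  calc ENNReal.ofReal (∫ ξ, f ξ ∂μ - ∫ ξ, f ξ ∂ν)
      ≤ ENNReal.ofReal (β * (∫⁻ p, c p.1 p.2 ∂π).toReal) := ENNReal.ofReal_le_ofReal hle
    _ = ENNReal.ofReal β * ∫⁻ p, c p.1 p.2 ∂π := by
        rw [ENNReal.ofReal_mul hβ.le, ENNReal.ofReal_toReal hI]

lemma le_mul_transportCost {c : Ξ → Ξ → ℝ≥0∞} {a b : ℝ≥0∞} (hb₀ : b ≠ 0) (hb : b ≠ ⊤)
    (h : ∀ π ∈ Couplings μ ν, a ≤ b * ∫⁻ p, c p.1 p.2 ∂π) : a ≤ b * transportCost c μ ν := by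
  simp only [transportCost, ENNReal.mul_iInf_of_ne hb₀ hb]
  exact le_iInf₂ h

end Coupling

theorem stmt2_general {Ξ X : Type*} [MeasurableSpace Ξ]
    (g : X → ℝ) (Q : X → Ξ → ℝ)
    (P ν : Measure Ξ)
    (c : Ξ → Ξ → ℝ≥0∞) (hcmeas : Measurable fun p : Ξ × Ξ => c p.1 p.2)
    (β : ℝ) (hβ : 0 < β)
    -- symmetry of the ground cost
    (hsym : ∀ ξ ξ' : Ξ, c ξ ξ' = c ξ' ξ)
    -- regret domination: `R(ξ,ξ') = sup_x (Q(x,ξ) − Q(x,ξ')) ≤ β·c(ξ,ξ')`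
    (hdom : ∀ ξ ξ' : Ξ,
      (⨆ x : X, ((Q x ξ - Q x ξ' : ℝ) : EReal)) ≤ (β : EReal) * ((c ξ ξ' : ℝ≥0∞) : EReal))
    -- `x_P` attains `v(P)` and `x_ν` attains `v(ν)`
    (vP vν : ℝ) (xP xν : X)
    (hattainP : g xP + ∫ ξ, Q xP ξ ∂P = vP)
    (hminP : ∀ x : X, vP ≤ g x + ∫ ξ, Q x ξ ∂P)
    (hattainν : g xν + ∫ ξ, Q xν ξ ∂ν = vν)
    (hminν : ∀ x : X, vν ≤ g x + ∫ ξ, Q x ξ ∂ν)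
    -- integrability of `Q(x_P,·)` and `Q(x_ν,·)` w.r.t. both measures
    (hintPP : Integrable (Q xP) P) (hintPν : Integrable (Q xP) ν)
    (hintνP : Integrable (Q xν) P) (hintνν : Integrable (Q xν) ν) :
    ((|vP - vν| : ℝ) : EReal)
      ≤ (β : EReal) * ((transportCost c P ν : ℝ≥0∞) : EReal) := by
  have hregret : ∀ x ξ ξ', ((Q x ξ - Q x ξ' : ℝ) : EReal) ≤ β * c ξ ξ' :=
    fun x ξ ξ' => (le_iSup (fun x => ((Q x ξ - Q x ξ' : ℝ) : EReal)) x).trans (hdom ξ ξ')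
  refine EReal.coe_le_coe_mul_of_ofReal_le (abs_nonneg _) hβ.le <|
    le_mul_transportCost (ENNReal.ofReal_pos.mpr hβ).ne' ENNReal.ofReal_ne_top ?_
  rintro π ⟨-, hfst, hsnd⟩
  rw [abs_eq_max_neg, ENNReal.ofReal_max, max_le_iff]
  constructor
  · calc ENNReal.ofReal (vP - vν) ≤ ENNReal.ofReal (∫ ξ, Q xν ξ ∂P - ∫ ξ, Q xν ξ ∂ν) :=
          ENNReal.ofReal_le_ofReal (by linarith [hminP xν])
      _ ≤ _ := ofReal_integral_sub_integral_le hfst hsnd hintνP hintνν hcmeas hβ (hregret xν)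
  · calc ENNReal.ofReal (-(vP - vν))
          ≤ ENNReal.ofReal (∫ ξ, -Q xP ξ ∂P - ∫ ξ, -Q xP ξ ∂ν) := by
          rw [integral_neg, integral_neg]
          exact ENNReal.ofReal_le_ofReal (by linarith [hminν xP])
      _ ≤ _ := ofReal_integral_sub_integral_le hfst hsnd hintPP.neg hintPν.neg hcmeas hβ
          fun ξ ξ' => by rw [neg_sub_neg, hsym]; exact hregret xP ξ' ξ

/-- Under the assumptions of Statement 1, if in addition the ground cost
`c` is symmetric, then `|v(P) − v(ν)| ≤ β·T_c(P,ν)` in the extended reals. -/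
theorem stmt2 {Ξ X : Type*} [MeasurableSpace Ξ] [Nonempty X]
    (g : X → ℝ) (Q : X → Ξ → ℝ) (hQmeas : ∀ x, Measurable (Q x))
    (P ν : Measure Ξ) [IsProbabilityMeasure P] [IsProbabilityMeasure ν]
    (c : Ξ → Ξ → ℝ≥0∞) (hcmeas : Measurable fun p : Ξ × Ξ => c p.1 p.2)
    (β : ℝ) (hβ : 0 < β)
    -- symmetry of the ground cost
    (hsym : ∀ ξ ξ' : Ξ, c ξ ξ' = c ξ' ξ)
    -- regret domination: `R(ξ,ξ') = sup_x (Q(x,ξ) − Q(x,ξ')) ≤ β·c(ξ,ξ')`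
    (hdom : ∀ ξ ξ' : Ξ,
      (⨆ x : X, ((Q x ξ - Q x ξ' : ℝ) : EReal)) ≤ (β : EReal) * ((c ξ ξ' : ℝ≥0∞) : EReal))
    -- `x_P` attains `v(P)` and `x_ν` attains `v(ν)`
    (vP vν : ℝ) (xP xν : X)
    (hattainP : g xP + ∫ ξ, Q xP ξ ∂P = vP)
    (hminP : ∀ x : X, vP ≤ g x + ∫ ξ, Q x ξ ∂P)
    (hattainν : g xν + ∫ ξ, Q xν ξ ∂ν = vν)
    (hminν : ∀ x : X, vν ≤ g x + ∫ ξ, Q x ξ ∂ν)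
    -- integrability of `Q(x_P,·)` and `Q(x_ν,·)` w.r.t. both measures
    (hintPP : Integrable (Q xP) P) (hintPν : Integrable (Q xP) ν)
    (hintνP : Integrable (Q xν) P) (hintνν : Integrable (Q xν) ν) :
    ((|vP - vν| : ℝ) : EReal)
      ≤ (β : EReal) * ((transportCost c P ν : ℝ≥0∞) : EReal) :=
  stmt2_general g Q P ν c hcmeas β hβ hsym hdom vP vν xP xν hattainP hminP hattainν hminν hintPP
    hintPν hintνP hintνν
end

section
/- Assume: (i) relatively complete recourse: for every x ∈ X and ξ ∈ Ξ the feasible set {z : Wz = h(ξ) − T(ξ)x, z ≥ 0} is nonempty; (ii) strong duality attainment: for every x ∈ X and ξ ∈ Ξ there exists π in the dual feasible set D = {π ∈ ℝ^m : Wᵀπ ≤ q} with πᵀ(h(ξ) − T(ξ)x) = Q(x,ξ); (iii) bounded duals: there is M_π > 0 with ‖π‖_∞ ≤ M_π for every π ∈ D; (iv) bounded first stage: ‖x‖_∞ ≤ r for all x ∈ X. Then for all ξ, ξ' ∈ Ξ, the regret satisfies R(ξ,ξ') = sup_{x ∈ X} (Q(x,ξ) − Q(x,ξ')) ≤ M_π·(‖h(ξ)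 − h(ξ')‖₁ + r·‖T(ξ) − T(ξ')‖₁). -/
open Matrix

/-- Value of the second-stage linear program with fixed recourse matrix `W`, cost `q`
and right-hand side `b`: `inf { qᵀz : Wz = b, z ≥ 0 }`. -/
noncomputable def lpValue {m k : ℕ} (W : Matrix (Fin m) (Fin k) ℝ) (q : Fin k → ℝ)
    (b : Fin m → ℝ) : ℝ :=
  sInf {r : ℝ | ∃ z : Fin k → ℝ, (∀ i, 0 ≤ z i) ∧ W.mulVec z = b ∧ r = q ⬝ᵥ z}

/-!
For a fixed first-stage decision `x`, take a dual optimum `π` of the problem at `ξ`. It stays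
dual feasible at `ξ'`, so by weak duality `Q(x,ξ) − Q(x,ξ') ≤ πᵀ(b − b')`, where `b` and `b'`
are the two right-hand sides. Hölder's inequality (`ℓ^∞` against `ℓ¹`) bounds this by
`M_π ‖b − b'‖₁`, and `‖b − b'‖₁ ≤ ‖h(ξ) − h(ξ')‖₁ + r ‖T(ξ) − T(ξ')‖₁` because `‖x‖_∞ ≤ r`.
-/

section Duality

variable {m k : ℕ} {W : Matrix (Fin m) (Fin k) ℝ} {q : Fin k → ℝ} {π b b' : Fin m → ℝ}

theorem dotProduct_le_lpValue (hπ : ∀ j, (Wᵀ *ᵥ π) j ≤ q j)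
    (hb : ∃ z : Fin k → ℝ, (∀ i, 0 ≤ z i) ∧ W *ᵥ z = b) :
    π ⬝ᵥ b ≤ lpValue W q b := by
  obtain ⟨z₀, hz₀, hWz₀⟩ := hb
  refine le_csInf ⟨q ⬝ᵥ z₀, z₀, hz₀, hWz₀, rfl⟩ ?_
  rintro _ ⟨z, hz, rfl, rfl⟩
  rw [dotProduct_mulVec, ← mulVec_transpose]
  exact Finset.sum_le_sum fun j _ => mul_le_mul_of_nonneg_right (hπ j) (hz j)

theorem lpValue_sub_le_dotProduct (hπ : ∀ j, (Wᵀ *ᵥ π) j ≤ q j)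
    (hπb : π ⬝ᵥ b = lpValue W q b)
    (hb' : ∃ z : Fin k → ℝ, (∀ i, 0 ≤ z i) ∧ W *ᵥ z = b') :
    lpValue W q b - lpValue W q b' ≤ π ⬝ᵥ (b - b') := by
  rw [dotProduct_sub, hπb]
  linarith [dotProduct_le_lpValue hπ hb']

end Duality

section Norms

variable {ι κ : Type*} [Fintype ι] [Fintype κ]

theorem dotProduct_le_mul_sum_abs {π v : ι → ℝ} {M : ℝ} (hπ : ∀ i, |π i| ≤ M) :
    π ⬝ᵥ v ≤ M * ∑ i, |v i| := by
  rw [Finset.mul_sum]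
  refine Finset.sum_le_sum fun i _ => ?_
  calc π i * v i ≤ |π i| * |v i| := (le_abs_self _).trans (abs_mul _ _).le
    _ ≤ M * |v i| := mul_le_mul_of_nonneg_right (hπ i) (abs_nonneg _)

theorem sum_abs_mulVec_le (A : Matrix ι κ ℝ) {x : κ → ℝ} {r : ℝ} (hx : ∀ j, |x j| ≤ r) :
    ∑ i, |(A *ᵥ x) i| ≤ r * ∑ i, ∑ j, |A i j| := by
  simp only [Finset.mul_sum]
  refine Finset.sum_le_sum fun i _ => (Finset.abs_sum_le_sum_abs _ _).trans ?_
  refine Finset.sum_le_sum fun j _ => ?_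
  rw [abs_mul, mul_comm r]
  exact mul_le_mul_of_nonneg_left (hx j) (abs_nonneg _)

theorem sum_abs_sub_mulVec_le (a : ι → ℝ) (A : Matrix ι κ ℝ) {x : κ → ℝ} {r : ℝ}
    (hx : ∀ j, |x j| ≤ r) :
    ∑ i, |(a - A *ᵥ x) i| ≤ ∑ i, |a i| + r * ∑ i, ∑ j, |A i j| := by
  calc ∑ i, |(a - A *ᵥ x) i| ≤ ∑ i, (|a i| + |(A *ᵥ x) i|) :=
        Finset.sum_le_sum fun i _ => abs_sub _ _
    _ ≤ ∑ i, |a i| + r * ∑ i, ∑ j, |A i j| := by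
        rw [Finset.sum_add_distrib]
        exact add_le_add_right (sum_abs_mulVec_le A hx) _

end Norms

theorem stmt8_general {Ξ : Type*} {n m k : ℕ}
    (X : Set (Fin n → ℝ))
    (W : Matrix (Fin m) (Fin k) ℝ) (q : Fin k → ℝ)
    (h : Ξ → Fin m → ℝ) (T : Ξ → Matrix (Fin m) (Fin n) ℝ)
    (Q : (Fin n → ℝ) → Ξ → ℝ)
    (hQ : ∀ x ξ, Q x ξ = lpValue W q (h ξ - (T ξ).mulVec x))
    -- (i) relatively complete recourse
    (hfeas : ∀ x ∈ X, ∀ ξ : Ξ, ∃ z : Fin k → ℝ,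
      (∀ i, 0 ≤ z i) ∧ W.mulVec z = h ξ - (T ξ).mulVec x)
    -- (ii) strong duality attainment on the dual feasible set `D = {π : Wᵀπ ≤ q}`
    (hdual : ∀ x ∈ X, ∀ ξ : Ξ, ∃ π : Fin m → ℝ,
      (∀ j, Wᵀ.mulVec π j ≤ q j) ∧ π ⬝ᵥ (h ξ - (T ξ).mulVec x) = Q x ξ)
    -- (iii) bounded duals
    (Mπ : ℝ) (hMπ : 0 < Mπ)
    (hbdd : ∀ π : Fin m → ℝ, (∀ j, Wᵀ.mulVec π j ≤ q j) → ∀ i, |π i| ≤ Mπ)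
    -- (iv) bounded first stage
    (r : ℝ) (hr : ∀ x ∈ X, ∀ i, |x i| ≤ r) :
    ∀ ξ ξ' : Ξ,
      (⨆ x ∈ X, ((Q x ξ - Q x ξ' : ℝ) : EReal))
        ≤ ((Mπ * ((∑ i, |h ξ i - h ξ' i|) + r * ∑ i, ∑ j, |T ξ i j - T ξ' i j|) : ℝ) : EReal) := by
  intro ξ ξ'
  refine iSup₂_le fun x hx => EReal.coe_le_coe_iff.2 ?_
  obtain ⟨π, hπD, hπQ⟩ := hdual x hx ξ
  have hrhs : (h ξ - T ξ *ᵥ x) - (h ξ' - T ξ' *ᵥ x) = (h ξ - h ξ') - (T ξ - T ξ') *ᵥ x := by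
    rw [sub_mulVec]; abel
  rw [hQ] at hπQ
  calc Q x ξ - Q x ξ' ≤ π ⬝ᵥ ((h ξ - h ξ') - (T ξ - T ξ') *ᵥ x) := by
        rw [hQ, hQ, ← hrhs]
        exact lpValue_sub_le_dotProduct hπD hπQ (hfeas x hx ξ')
    _ ≤ Mπ * ∑ i, |((h ξ - h ξ') - (T ξ - T ξ') *ᵥ x) i| :=
        dotProduct_le_mul_sum_abs (hbdd π hπD)
    _ ≤ Mπ * ((∑ i, |h ξ i - h ξ' i|) + r * ∑ i, ∑ j, |T ξ i j - T ξ' i j|) :=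
        mul_le_mul_of_nonneg_left (sum_abs_sub_mulVec_le _ _ (hr x hx)) hMπ.le

/-- Under relatively complete recourse, dual strong-duality attainment,
bounded dual feasible set (`‖π‖_∞ ≤ M_π`) and bounded first stage (`‖x‖_∞ ≤ r`), the regret
`R(ξ,ξ') = sup_{x ∈ X} (Q(x,ξ) − Q(x,ξ'))` satisfies
`R(ξ,ξ') ≤ M_π·(‖h(ξ) − h(ξ')‖₁ + r·‖T(ξ) − T(ξ')‖₁)`. -/
theorem stmt8 {Ξ : Type*} {n m k : ℕ}
    (X : Set (Fin n → ℝ)) (hX : X.Nonempty)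
    (W : Matrix (Fin m) (Fin k) ℝ) (q : Fin k → ℝ)
    (h : Ξ → Fin m → ℝ) (T : Ξ → Matrix (Fin m) (Fin n) ℝ)
    (Q : (Fin n → ℝ) → Ξ → ℝ)
    (hQ : ∀ x ξ, Q x ξ = lpValue W q (h ξ - (T ξ).mulVec x))
    -- (i) relatively complete recourse
    (hfeas : ∀ x ∈ X, ∀ ξ : Ξ, ∃ z : Fin k → ℝ,
      (∀ i, 0 ≤ z i) ∧ W.mulVec z = h ξ - (T ξ).mulVec x)
    -- (ii) strong duality attainment on the dual feasible set `D = {π : Wᵀπ ≤ q}`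
    (hdual : ∀ x ∈ X, ∀ ξ : Ξ, ∃ π : Fin m → ℝ,
      (∀ j, Wᵀ.mulVec π j ≤ q j) ∧ π ⬝ᵥ (h ξ - (T ξ).mulVec x) = Q x ξ)
    -- (iii) bounded duals
    (Mπ : ℝ) (hMπ : 0 < Mπ)
    (hbdd : ∀ π : Fin m → ℝ, (∀ j, Wᵀ.mulVec π j ≤ q j) → ∀ i, |π i| ≤ Mπ)
    -- (iv) bounded first stage
    (r : ℝ) (hr : ∀ x ∈ X, ∀ i, |x i| ≤ r) :
    ∀ ξ ξ' : Ξ,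
      (⨆ x ∈ X, ((Q x ξ - Q x ξ' : ℝ) : EReal))
        ≤ ((Mπ * ((∑ i, |h ξ i - h ξ' i|) + r * ∑ i, ∑ j, |T ξ i j - T ξ' i j|) : ℝ) : EReal) :=
  stmt8_general X W q h T Q hQ hfeas hdual Mπ hMπ hbdd r hr
end
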